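/- arXiv:1701.07937 — 3 statements merged into one kernel-verified Lean document; each statement's English description precedes it below -/
import Mathlib

section
/- Assuming classical logic, there exists a polymorphic endofunction t : ∀ (X : Type u), X → X such that t Bool true = false and t Bool false = true (in particular, t is not the polymorphic identity function). -/
open Classical in
/-- Assuming classical logic (ambient in Lean/Mathlib), there exists a polymorphic
endofunction `t : ∀ X, X → X` that swaps the two elements of `Bool`. -/
theorem nontrivial_polymorphic_endofunction :
    ∃ t : ∀ (X : Type), X → X, t Bool true = false ∧ t Bool false = true := by
  refine ⟨fun X x => if h : X = Bool then cast h.symm (!(cast h x)) else x, ?_, ?_⟩ <;> simp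
end

section
/- Assuming classical logic, the free theorem for polymorphic endofunctions fails: there exist a polymorphic endofunction t : ∀ (X : Type u), X → X, types X X' : Type u, a function f : X → X', and a point x : X such that t X' (f x) ≠ f (t X x). -/
universe u

/-- Assuming classical logic (ambient in Lean/Mathlib), the free theorem for
polymorphic endofunctions fails: there exist `t : ∀ X, X → X`, types `X X'`,
a function `f : X → X'` and a point `x : X` with `t X' (f x) ≠ f (t X x)`. -/
theorem free_theorem_fails_for_polymorphic_endofunctions :
    ∃ (t : ∀ (X : Type u), X → X) (X X' : Type u) (f : X → X') (x : X),
      t X' (f x) ≠ f (t X x) := by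
  classical
  refine ⟨fun X x => if h : ∃ y : X, y ≠ x then h.choose else x,
    ULift Bool, ULift Bool, fun _ => ULift.up true, ULift.up true, ?_⟩
  have h : ∃ y : ULift Bool, y ≠ ULift.up true := ⟨ULift.up false, by simp⟩
  simp only [dif_pos h]
  exact h.choose_spec
end

section
/- Let A A' B B' : Type u, let R : A → A' → Type u and S : B → B' → Type u be binary type families, and let f : A → B, f' : A' → B', and f̄ : ∀ (a : A) (a' : A'), R a a' → S (f a) (f' a') be a relational function from R to S. Then there exists relational quasi-inverse data exhibiting (f, f', f̄) as an equivalence in the relational model — namely (g : B → A, g' : B' → A', ḡ : ∀ b b', S b b' → R (g b) (g' b')) together with H : ∀ a, g (f a) = a, H' : ∀ a', g' (f' a') = a', and H̄ : ∀ a a' (r : R a a'), the transport of ḡ (f a) (f' a') (f̄ a a' r) along H a and H' a' equals r, and (h : B → A, h' : B' → A', h̄ : ∀ b b', S b b' → R (h b) (h' b')) together with K : ∀ b, f (h b) = b, K' : ∀ b', f' (h' b') = b', and K̄ : ∀ b b' (s : S b b'), the transport of f̄ (h b) (h' b') (h̄ b b' s) along K b and K' b' equals s — if and only if f and f' are bijective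 and for all a : A and a' : A' the map f̄ a a' : R a a' → S (f a) (f' a') is bijective. -/
universe u

/-- A relational function `(f, f', fbar)` between binary type families
`R : A → A' → Type u` and `S : B → B' → Type u` admits relational quasi-inverse
data (a relational retraction and a relational section, with the witnessing
equalities on relation components stated via transport/cast) if and only if
`f` and `f'` are bijective and each fiberwise map `fbar a a'` is bijective. -/
theorem relational_equiv_iff_componentwise
    {A A' B B' : Type u} (R : A → A' → Type u) (S : B → B' → Type u)
    (f : A → B) (f' : A' → B')
    (fbar : ∀ (a : A) (a' : A'), R a a' → S (f a) (f' a')) :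
    ((∃ (g : B → A) (g' : B' → A')
        (gbar : ∀ (b : B) (b' : B'), S b b' → R (g b) (g' b'))
        (H : ∀ a, g (f a) = a) (H' : ∀ a', g' (f' a') = a'),
        ∀ (a : A) (a' : A') (r : R a a'),
          cast (congrArg₂ R (H a) (H' a')) (gbar (f a) (f' a') (fbar a a' r)) = r) ∧
      (∃ (h : B → A) (h' : B' → A')
        (hbar : ∀ (b : B) (b' : B'), S b b' → R (h b) (h' b'))
        (K : ∀ b, f (h b) = b) (K' : ∀ b', f' (h' b') = b'),
        ∀ (b : B) (b' : B') (s : S b b'),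
          cast (congrArg₂ S (K b) (K' b')) (fbar (h b) (h' b') (hbar b b' s)) = s))
      ↔ (Function.Bijective f ∧ Function.Bijective f' ∧
          ∀ (a : A) (a' : A'), Function.Bijective (fbar a a')) := by

  constructor
  · rintro ⟨⟨g, g', gbar, H, H', Hbar⟩, ⟨h, h', hbar, K, K', Kbar⟩⟩
    have hfinj : Function.Injective f := Function.LeftInverse.injective H
    have hfsurj : Function.Surjective f := Function.RightInverse.surjective K
    have hf'inj : Function.Injective f' := Function.LeftInverse.injective H'
    have hf'surj : Function.Surjective f' := Function.RightInverse.surjective K'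
    refine ⟨⟨hfinj, hfsurj⟩, ⟨hf'inj, hf'surj⟩, fun a a' => ⟨?_, ?_⟩⟩
    · intro r1 r2 hr
      have := Hbar a a' r1
      rw [hr, Hbar a a' r2] at this
      exact this.symm
    · intro s
      have ha : h (f a) = a := hfinj (K (f a))
      have ha' : h' (f' a') = a' := hf'inj (K' (f' a'))
      refine ⟨cast (congrArg₂ R ha ha') (hbar (f a) (f' a') s), ?_⟩
      have key : ∀ (x : A) (x' : A') (hx : x = a) (hx' : x' = a') (t : R x x'),
          fbar a a' (cast (congrArg₂ R hx hx') t)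
            = cast (congrArg₂ S (congrArg f hx) (congrArg f' hx')) (fbar x x' t) := by
        rintro _ _ rfl rfl t; rfl
      rw [key _ _ ha ha']
      exact Kbar (f a) (f' a') s
  · rintro ⟨hf, hf', hfbar⟩
    obtain ⟨g, Hg, Kg⟩ := Function.bijective_iff_has_inverse.mp hf
    obtain ⟨g', Hg', Kg'⟩ := Function.bijective_iff_has_inverse.mp hf'
    choose kbar Hk Kk using fun a a' => Function.bijective_iff_has_inverse.mp (hfbar a a')
    let gbar : ∀ (b : B) (b' : B'), S b b' → R (g b) (g' b') := fun b b' s =>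
      kbar (g b) (g' b') (cast (congrArg₂ S (Kg b).symm (Kg' b').symm) s)
    refine ⟨⟨g, g', gbar, Hg, Hg', ?_⟩, ⟨g, g', gbar, Kg, Kg', ?_⟩⟩
    · intro a a' r
      rw [cast_eq_iff_heq]
      show HEq (kbar (g (f a)) (g' (f' a')) _) r
      have key : ∀ (x : A) (x' : A') (hx : x = a) (hx' : x' = a') (s : S (f x) (f' x')),
          HEq s (fbar a a' r) → HEq (kbar x x' s) r := by
        rintro x x' rfl rfl s hs
        rw [eq_of_heq hs, Hk x x' r]
      exact key _ _ (Hg a) (Hg' a') _ (cast_heq _ _)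
    · intro b b' s
      show cast _ (fbar (g b) (g' b') (kbar (g b) (g' b') _)) = s
      rw [Kk (g b) (g' b'), cast_cast, cast_eq_iff_heq]
end
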